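/- Let c(n,k,l) be the number of permutations of [n] with exactly k cycles and exactly l fixed points. Then for n ≥ 1 and all k, l, c(n+1,k,l) = c(n,k−1,l−1) + (n−l) · c(n,k,l) + (l+1) · c(n,k,l+1). -/

import Mathlib

open Finset

/-- Number of cycles of a permutation, counting fixed points as 1-cycles. -/
def numCycles {β : Type*} [Fintype β] [DecidableEq β] (σ : Equiv.Perm β) : ℕ :=
  σ.cycleType.card + (Finset.univ.filter fun i => σ i = i).card

/-- The α-permanent of a square matrix: ∑_σ α^{#σ} ∏_j M_{j,σ(j)}. -/
noncomputable def aper {β : Type*} [Fintype β] [DecidableEq β]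
    (α : ℂ) (M : Matrix β β ℂ) : ℂ :=
  ∑ σ : Equiv.Perm β, α ^ numCycles σ * ∏ j, M j (σ j)

/-- Falling factorial x(x-1)⋯(x-j+1). -/
def fallF (x : ℂ) (j : ℕ) : ℂ := ∏ i ∈ Finset.range j, (x - i)

/-- Rising factorial x(x+1)⋯(x+m-1). -/
def riseF (x : ℂ) (m : ℕ) : ℂ := ∏ i ∈ Finset.range m, (x + i)

/-- Principal submatrix of `M` indexed by the finset `b`. -/
def subM {n : ℕ} (M : Matrix (Fin n) (Fin n) ℂ) (b : Finset (Fin n)) :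
    Matrix b b ℂ :=
  M.submatrix (fun i => (i : Fin n)) (fun j => (j : Fin n))

/-- Number of permutations of `Fin n` with exactly `k` cycles and exactly `l` fixed points. -/
def genRen (n k l : ℕ) : ℕ :=
  ((Finset.univ : Finset (Equiv.Perm (Fin n))).filter fun σ =>
    numCycles σ = k ∧ (Finset.univ.filter fun i => σ i = i).card = l).card
/-- `genRen` extended with value 0 at negative arguments. -/
def genRenZ (n : ℕ) (k l : ℤ) : ℤ :=
  if 0 ≤ k ∧ 0 ≤ l then genRen n k.toNat l.toNat else 0

/-!
Write `σ ∈ S_{n+1}` as `σ = (0 p) * τ` with `τ` fixing `0`; `τ` is the image of some `e ∈ S_n`,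
and `(p, e)` ranges over all pairs (`Equiv.Perm.decomposeFin`). Multiplying by the transposition
`(x σ(x))` cuts `x` out of its cycle and makes it a fixed point, so it raises the number of cycles
by exactly one. Hence for `p = 0` the element `0` is a new fixed point (`c(n, k-1, l-1)`), while for
`p ≠ 0` the cycle count of `σ` equals that of `e`: if `p` is one of the `l + 1` fixed points of `e`
it is lost to a 2-cycle, and if `p` is one of the `n - l` moved points of `e` the fixed points stay.
-/

open Equiv Equiv.Perm

namespace Equiv.Perm

variable {α : Type*} [Fintype α] [DecidableEq α]

lemma card_fixed_add_card_support (σ : Perm α) :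
    #{i | σ i = i} + #σ.support = Fintype.card α := by
  rw [← card_univ, ← card_filter_add_card_filter_not (s := univ) (fun i => σ i = i)]
  rfl

lemma card_fixed_le (σ : Perm α) : #{i | σ i = i} ≤ Fintype.card α :=
  (Nat.le_add_right _ _).trans_eq (card_fixed_add_card_support σ)

lemma numCycles_add_sum_cycleType (σ : Perm α) :
    numCycles σ + σ.cycleType.sum = σ.cycleType.card + Fintype.card α := by
  rw [numCycles, sum_cycleType, ← card_fixed_add_card_support σ]
  ring

lemma IsCycle.sum_cycleType_swap_mul {c : Perm α} (hc : c.IsCycle) {x : α}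
    (hx : c x ≠ x) :
    (swap x (c x) * c).cycleType.sum + 1 + c.cycleType.card =
      c.cycleType.sum + (swap x (c x) * c).cycleType.card := by
  rw [hc.cycleType]
  by_cases hcc : c (c x) = x
  · have hc2 : c = swap x (c x) := hc.eq_swap_of_apply_apply_eq_self hx hcc
    have hsupp : #c.support = 2 := by rw [hc2, card_support_swap hx.symm]
    have h1 : swap x (c x) * c = 1 := by
      nth_rewrite 2 [hc2]
      exact swap_mul_self _ _
    simp [h1, hsupp]
  · have hx' : x ∈ c.support := mem_support.2 hx
    rw [(hc.swap_mul hx hcc).cycleType, support_swap_mul_eq c x hcc, sdiff_singleton_eq_erase,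
      card_erase_of_mem hx']
    have := card_pos.2 ⟨x, hx'⟩
    simp only [Multiset.sum_singleton, Multiset.card_singleton]
    omega

lemma sum_cycleType_swap_mul {σ : Perm α} {x : α} (hx : σ x ≠ x) :
    (swap x (σ x) * σ).cycleType.sum + 1 + σ.cycleType.card =
      σ.cycleType.sum + (swap x (σ x) * σ).cycleType.card := by
  obtain ⟨c, hcx⟩ : ∃ c, c = σ.cycleOf x := ⟨_, rfl⟩
  have hc : c ∈ σ.cycleFactorsFinset := by
    rw [hcx, cycleOf_mem_cycleFactorsFinset_iff]
    exact mem_support.2 hx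
  obtain ⟨r, hr⟩ : ∃ r, r = σ * c⁻¹ := ⟨_, rfl⟩
  have hrc : Disjoint r c := hr ▸ disjoint_mul_inv_of_mem_cycleFactorsFinset hc
  have hσ : σ = c * r := by rw [← hrc.commute.eq, hr, inv_mul_cancel_right]
  have hcx' : c x = σ x := by rw [hcx, cycleOf_apply_self]
  have hτ : swap x (σ x) * σ = (swap x (c x) * c) * r := by
    rw [hcx', mul_assoc, ← hσ]
  have hτc : Disjoint (swap x (c x) * c) r :=
    hrc.symm.mono (fun y hy => (mem_support_swap_mul_imp_mem_support_ne hy).1) le_rfl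
  have hcyc := (hcx ▸ isCycle_cycleOf σ hx : c.IsCycle).sum_cycleType_swap_mul (hcx'.trans_ne hx)
  rw [hτ, hτc.cycleType_mul, hσ, (hrc.symm).cycleType_mul]
  simp only [Multiset.sum_add, Multiset.card_add]
  omega

lemma numCycles_swap_mul {σ : Perm α} {x : α} (hx : σ x ≠ x) :
    numCycles (swap x (σ x) * σ) = numCycles σ + 1 := by
  have := numCycles_add_sum_cycleType σ
  have := numCycles_add_sum_cycleType (swap x (σ x) * σ)
  have := sum_cycleType_swap_mul hx
  omega

end Equiv.Perm

section

variable {n : ℕ} (e : Perm (Fin n))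

lemma decomposeFin_symm_eq_swap_mul (p : Fin (n + 1)) :
    decomposeFin.symm (p, e) = swap 0 p * decomposeFin.symm (0, e) := by
  ext x
  refine Fin.cases ?_ (fun i => ?_) x <;> simp [decomposeFin_symm_apply_succ]

lemma decomposeFin_symm_zero_eq_extendDomain :
    decomposeFin.symm (0, e) = e.extendDomain (finSuccAboveEquiv 0) := by
  ext x
  refine Fin.cases ?_ (fun i => ?_) x
  · rw [decomposeFin_symm_apply_zero, extendDomain_apply_not_subtype _ _ (by simp)]
  · have hsucc (j : Fin n) : (finSuccAboveEquiv 0 j : Fin (n + 1)) = j.succ := by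
      simp [finSuccAboveEquiv_apply]
    rw [decomposeFin_symm_apply_succ, swap_self, refl_apply, ← hsucc i, extendDomain_apply_image,
      hsucc]

lemma card_fixed_decomposeFin_symm_zero :
    #{i | decomposeFin.symm (0, e) i = i} = #{i | e i = i} + 1 := by
  rw [Fin.card_filter_univ_succ]
  simp [decomposeFin_symm_apply_succ, add_comm]

lemma card_fixed_decomposeFin_symm_succ (q : Fin n) :
    #{i | decomposeFin.symm (q.succ, e) i = i} = #((univ.filter fun i => e i = i).erase q) := by
  rw [Fin.card_filter_univ_succ]
  simp only [decomposeFin_symm_apply_zero, decomposeFin_symm_apply_succ, Fin.succ_ne_zero,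
    if_false]
  congr 1
  ext i
  simp only [mem_filter, mem_univ, true_and, mem_erase, swap_apply_def, Fin.succ_inj]
  split_ifs <;> grind [Fin.succ_ne_zero]

lemma numCycles_decomposeFin_symm_zero :
    numCycles (decomposeFin.symm (0, e)) = numCycles e + 1 := by
  rw [numCycles, numCycles, card_fixed_decomposeFin_symm_zero,
    decomposeFin_symm_zero_eq_extendDomain, cycleType_extendDomain, add_assoc]

lemma numCycles_decomposeFin_symm_succ (q : Fin n) :
    numCycles (decomposeFin.symm (q.succ, e)) = numCycles e := by
  have hswap : swap 0 q.succ * decomposeFin.symm (q.succ, e) = decomposeFin.symm (0, e) := by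
    rw [decomposeFin_symm_eq_swap_mul e q.succ, swap_mul_self_mul]
  have h := numCycles_swap_mul (σ := decomposeFin.symm (q.succ, e)) (x := 0)
    (by simp [decomposeFin_symm_apply_zero])
  rw [decomposeFin_symm_apply_zero, hswap, numCycles_decomposeFin_symm_zero] at h
  omega

end

lemma sum_numCycles_card_fixed_succ {M : Type*} [AddCommMonoid M] (n : ℕ) (g : ℕ → ℕ → M) :
    ∑ σ : Perm (Fin (n + 1)), g (numCycles σ) #{i | σ i = i} =
      ∑ e : Perm (Fin n), (g (numCycles e + 1) (#{i | e i = i} + 1) +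
        #{i | e i = i} • g (numCycles e) (#{i | e i = i} - 1) +
        (n - #{i | e i = i}) • g (numCycles e) #{i | e i = i}) := by
  rw [← decomposeFin.symm.sum_comp, Fintype.sum_prod_type, Finset.sum_comm]
  refine sum_congr rfl fun e _ => ?_
  rw [Fin.sum_univ_succ, ← sum_filter_add_sum_filter_not univ (fun q => e q = q),
    numCycles_decomposeFin_symm_zero, card_fixed_decomposeFin_symm_zero]
  have hfixed : ∀ q ∈ univ.filter (fun q => e q = q),
      g (numCycles (decomposeFin.symm (q.succ, e))) #{i | decomposeFin.symm (q.succ, e) i = i} =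
        g (numCycles e) (#{i | e i = i} - 1) := by
    intro q hq
    rw [numCycles_decomposeFin_symm_succ, card_fixed_decomposeFin_symm_succ, card_erase_of_mem hq]
  have hmoved : ∀ q ∈ univ.filter (fun q => ¬ e q = q),
      g (numCycles (decomposeFin.symm (q.succ, e))) #{i | decomposeFin.symm (q.succ, e) i = i} =
        g (numCycles e) #{i | e i = i} := by
    intro q hq
    rw [numCycles_decomposeFin_symm_succ, card_fixed_decomposeFin_symm_succ,
      erase_eq_of_notMem (by simpa using hq)]
  have hcard : #{q | ¬ e q = q} = n - #{i | e i = i} := by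
    have := card_fixed_add_card_support e
    rw [Fintype.card_fin] at this
    change #e.support = _
    omega
  rw [sum_congr rfl hfixed, sum_congr rfl hmoved, sum_const, sum_const, hcard, ← add_assoc]

lemma genRenZ_eq_sum (n : ℕ) (k l : ℤ) :
    genRenZ n k l = ∑ e : Perm (Fin n),
      if (numCycles e : ℤ) = k ∧ (#{i | e i = i} : ℤ) = l then 1 else 0 := by
  rw [genRenZ, genRen]
  split_ifs with hkl
  · obtain ⟨k, rfl⟩ := Int.eq_ofNat_of_zero_le hkl.1
    obtain ⟨l, rfl⟩ := Int.eq_ofNat_of_zero_le hkl.2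
    rw [Int.toNat_natCast, Int.toNat_natCast, card_filter]
    push_cast
    simp only [Nat.cast_inj]
  · refine (sum_eq_zero fun e _ => if_neg ?_).symm
    omega

theorem genRen_recursion_general (n : ℕ) (k l : ℤ) :
    genRenZ (n + 1) k l =
      genRenZ n (k - 1) (l - 1) + ((n : ℤ) - l) * genRenZ n k l +
        (l + 1) * genRenZ n k (l + 1) := by
  simp only [genRenZ_eq_sum, mul_sum, ← sum_add_distrib]
  rw [sum_numCycles_card_fixed_succ n fun a b => if (a : ℤ) = k ∧ (b : ℤ) = l then (1 : ℤ) else 0]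
  refine sum_congr rfl fun e _ => ?_
  have hle : #{i | e i = i} ≤ n := (card_fixed_le e).trans_eq (Fintype.card_fin n)
  simp only [nsmul_eq_mul, Nat.cast_sub hle]
  split_ifs <;> push_cast at * <;> omega

theorem genRen_recursion (n : ℕ) (hn : 1 ≤ n) (k l : ℤ) :
    genRenZ (n + 1) k l =
      genRenZ n (k - 1) (l - 1) + ((n : ℤ) - l) * genRenZ n k l +
        (l + 1) * genRenZ n k (l + 1) :=
  genRen_recursion_general n k l
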